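/- arXiv:2504.16349 — 3 statements merged into one kernel-verified Lean document; each statement's English description precedes it below -/
import Mathlib

section
/- For i.i.d. positive random variables (τ_k) with density ρ satisfying ρ(s) ≤ C̃ s^{κ−1} on [0,T], and for every n ≥ 0, E[(T − T_{N_T})^{η−1} ∏_{k=1}^{N_T} (C ΔT_k^{−θ}) 1_{{N_T = n}}] ≤ (C C̃)ⁿ T^{η + n(κ−θ) − 1} Γ(η) Γ(κ−θ)ⁿ / Γ(η + n(κ−θ)), for any η > 0 and θ < κ. -/
/-!
On `{N_T = n}` with all `τ_k > 0`, the grid points before `T` are the partial sums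
`S_k = τ_1 + ⋯ + τ_k`, so the integrand is `∏_{k ≤ n} C τ_k^{-θ} · (T - S_n)^{η-1} 1_{S_n < T}`.
Integrating out the last waiting time against its density `≤ C̃ t^{κ-1}` is a Beta integral,
`∫_0^{x-s} C C̃ t^{κ-θ-1} (x-s-t)^{b-1} dt = C C̃ B(κ-θ, b) (x-s)^{κ-θ+b-1}`,
which turns the kernel `(x - s)^{b-1}` into `(x - s)^{b+κ-θ-1}`. By independence this can be
iterated `n` times starting from `b = η`, and the Beta factors telescope to
`Γ(η) Γ(κ-θ)ⁿ / Γ(η + n(κ-θ))`.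
-/

open MeasureTheory ProbabilityTheory

/-- The random time grid `T₀ = 0`, `T_k = (T_{k-1} + τ_k) ∧ T`. -/
noncomputable def Tgrid {Ω : Type*} (T : ℝ) (τ : ℕ → Ω → ℝ) : ℕ → Ω → ℝ
  | 0 => fun _ => 0
  | k + 1 => fun ω => min (Tgrid T τ k ω + τ (k + 1) ω) T

/-- `N_T = max{k ≥ 0 : T_k < T}`, the number of grid points in `[0,T)`. -/
noncomputable def NT {Ω : Type*} (T : ℝ) (τ : ℕ → Ω → ℝ) (ω : Ω) : ℕ :=
  sSup {k : ℕ | Tgrid T τ k ω < T}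

open scoped ENNReal

theorem integral_rpow_mul_rpow_sub {a b y : ℝ} (ha : 0 < a) (hb : 0 < b) (hy : 0 < y) :
    ∫ t in (0 : ℝ)..y, t ^ (a - 1) * (y - t) ^ (b - 1) = y ^ (a + b - 1) * beta a b := by
  apply Complex.ofReal_injective
  have hβ : Complex.betaIntegral a b = (beta a b : ℂ) := by
    rw [Complex.betaIntegral_eq_Gamma_mul_div _ _ (by simpa) (by simpa), beta]
    push_cast [← Complex.Gamma_ofReal]
    rfl
  rw [← intervalIntegral.integral_ofReal, Complex.ofReal_mul, ← hβ,
    Complex.ofReal_cpow hy.le, Complex.ofReal_sub, Complex.ofReal_add, Complex.ofReal_one,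
    ← Complex.betaIntegral_scaled _ _ hy]
  refine intervalIntegral.integral_congr fun t ht => ?_
  rw [Set.uIcc_of_le hy.le] at ht
  rw [Complex.ofReal_mul, Complex.ofReal_cpow ht.1, Complex.ofReal_cpow (sub_nonneg.2 ht.2)]
  push_cast
  rfl

theorem lintegral_Ioo_rpow_mul_rpow_sub {a b y : ℝ} (ha : 0 < a) (hb : 0 < b) (hy : 0 < y) :
    ∫⁻ t in Set.Ioo 0 y, ENNReal.ofReal (t ^ (a - 1) * (y - t) ^ (b - 1))
      = ENNReal.ofReal (y ^ (a + b - 1) * beta a b) := by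
  have hI := integral_rpow_mul_rpow_sub ha hb hy
  have hint := intervalIntegral.intervalIntegrable_of_integral_ne_zero
    (hI ▸ (mul_pos (Real.rpow_pos_of_pos hy _) (beta_pos ha hb)).ne')
  rw [intervalIntegrable_iff_integrableOn_Ioo_of_le hy.le] at hint
  rw [← ofReal_integral_eq_lintegral_ofReal hint, ← integral_Ioc_eq_integral_Ioo,
    ← intervalIntegral.integral_of_le hy.le, hI]
  filter_upwards [ae_restrict_mem measurableSet_Ioo] with t ht
  exact mul_nonneg (Real.rpow_nonneg ht.1.le _) (Real.rpow_nonneg (sub_nonneg.2 ht.2.le) _)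

noncomputable def powKernel (x b : ℝ) : ℝ → ℝ≥0∞ :=
  (Set.Ico 0 x).indicator fun u => ENNReal.ofReal ((x - u) ^ (b - 1))

@[fun_prop]
theorem measurable_powKernel (x b : ℝ) : Measurable (powKernel x b) :=
  (Measurable.ennreal_ofReal (by fun_prop)).indicator measurableSet_Ico

theorem lintegral_mul_powKernel_add_le {f : ℝ → ℝ≥0∞} {a b c x s : ℝ}
    (ha : 0 < a) (hb : 0 < b) (hc : 0 ≤ c) (hs : 0 ≤ s) (hf0 : ∀ t ≤ 0, f t = 0)
    (hf : ∀ᵐ t ∂volume.restrict (Set.Ioc 0 x), f t ≤ ENNReal.ofReal (c * t ^ (a - 1))) :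
    ∫⁻ t, f t * powKernel x b (s + t)
      ≤ ENNReal.ofReal (c * beta a b) * powKernel x (a + b) s := by
  have hIoo : ∀ t, f t * powKernel x b (s + t)
      = (Set.Ioo 0 (x - s)).indicator
          (fun t => f t * ENNReal.ofReal ((x - s - t) ^ (b - 1))) t := by
    intro t
    rcases le_or_gt t 0 with ht | ht
    · simp [hf0 t ht, Set.indicator_of_notMem (fun h : t ∈ Set.Ioo 0 (x - s) => ht.not_gt h.1)]
    · by_cases htx : t < x - s
      · rw [Set.indicator_of_mem (Set.mem_Ioo.2 ⟨ht, htx⟩), powKernel,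
          Set.indicator_of_mem (Set.mem_Ico.2 ⟨by linarith, by linarith⟩), sub_add_eq_sub_sub]
      · rw [Set.indicator_of_notMem (fun h => htx h.2), powKernel,
          Set.indicator_of_notMem (fun h => htx (by linarith [h.2])), mul_zero]
  calc ∫⁻ t, f t * powKernel x b (s + t)
      = ∫⁻ t in Set.Ioo 0 (x - s), f t * ENNReal.ofReal ((x - s - t) ^ (b - 1)) := by
        rw [lintegral_congr hIoo, lintegral_indicator measurableSet_Ioo]
    _ ≤ ∫⁻ t in Set.Ioo 0 (x - s),
          ENNReal.ofReal c * ENNReal.ofReal (t ^ (a - 1) * (x - s - t) ^ (b - 1)) := by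
        refine lintegral_mono_ae ?_
        have hsub : Set.Ioo 0 (x - s) ⊆ Set.Ioc 0 x := fun t ht => ⟨ht.1, by linarith [ht.2]⟩
        filter_upwards [ae_restrict_of_ae_restrict_of_subset hsub hf,
          ae_restrict_mem measurableSet_Ioo] with t hft ht
        calc f t * ENNReal.ofReal ((x - s - t) ^ (b - 1))
            ≤ ENNReal.ofReal (c * t ^ (a - 1)) * ENNReal.ofReal ((x - s - t) ^ (b - 1)) :=
              mul_le_mul_left hft _
          _ = _ := by
              rw [← ENNReal.ofReal_mul hc, ← ENNReal.ofReal_mul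
                (mul_nonneg hc (Real.rpow_nonneg ht.1.le _)), mul_assoc]
    _ = ENNReal.ofReal (c * beta a b) * powKernel x (a + b) s := by
        rw [lintegral_const_mul _ (by fun_prop)]
        rcases lt_or_ge s x with hsx | hsx
        · rw [lintegral_Ioo_rpow_mul_rpow_sub ha hb (sub_pos.2 hsx), powKernel,
            Set.indicator_of_mem (Set.mem_Ico.2 ⟨hs, hsx⟩), ← ENNReal.ofReal_mul hc,
            ← ENNReal.ofReal_mul (mul_nonneg hc (beta_pos ha hb).le)]
          ring_nf
        · rw [Set.Ioo_eq_empty (by linarith), Measure.restrict_empty, lintegral_zero_measure,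
            powKernel, Set.indicator_of_notMem (fun h => hsx.not_gt h.2), mul_zero, mul_zero]

theorem lintegral_comp_eq_lintegral_lintegral_of_indepFun {Ω α β : Type*} [MeasurableSpace Ω]
    [MeasurableSpace α] [MeasurableSpace β] {P : Measure Ω} [IsFiniteMeasure P]
    {X : Ω → α} {Y : Ω → β} (hX : Measurable X) (hY : Measurable Y) (hXY : IndepFun X Y P)
    {F : α → β → ℝ≥0∞} (hF : Measurable (Function.uncurry F)) :
    ∫⁻ ω, F (X ω) (Y ω) ∂P = ∫⁻ ω, ∫⁻ y, F (X ω) y ∂(P.map Y) ∂P := by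
  calc ∫⁻ ω, F (X ω) (Y ω) ∂P
      = ∫⁻ p, Function.uncurry F p ∂(P.map fun ω => (X ω, Y ω)) :=
        (lintegral_map hF (hX.prodMk hY)).symm
    _ = ∫⁻ x, ∫⁻ y, F x y ∂(P.map Y) ∂(P.map X) := by
        rw [(indepFun_iff_map_prod_eq_prod_map_map hX.aemeasurable hY.aemeasurable).1 hXY,
          lintegral_prod _ hF.aemeasurable]
        rfl
    _ = ∫⁻ ω, ∫⁻ y, F (X ω) y ∂(P.map Y) ∂P := lintegral_map hF.lintegral_prod_right' hX

theorem indepFun_sum_prod_Icc {Ω : Type*} [MeasurableSpace Ω] {P : Measure Ω}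
    {τ : ℕ → Ω → ℝ} (hτ : ∀ k, Measurable (τ k)) (hindep : iIndepFun τ P)
    {w : ℝ → ℝ≥0∞} (hw : Measurable w) (m : ℕ) :
    IndepFun (fun ω => (∑ k ∈ Finset.Icc 1 m, τ k ω, ∏ k ∈ Finset.Icc 1 m, w (τ k ω)))
      (τ (m + 1)) P := by
  have hdisj : Disjoint (Finset.Icc 1 m) {m + 1} := by simp
  have h := (hindep.indepFun_finset _ _ hdisj hτ).comp
    (φ := fun r => (∑ k, r k, ∏ k, w (r k))) (ψ := fun r => r ⟨m + 1, Finset.mem_singleton_self _⟩)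
    ((Finset.measurable_sum _ fun k _ => measurable_pi_apply k).prodMk
      (Finset.measurable_prod _ fun k _ => hw.comp (measurable_pi_apply k)))
    (measurable_pi_apply (X := fun _ : ({m + 1} : Finset ℕ) => ℝ) _)
  convert h using 2 with ω
  · rw [Function.comp_apply, Finset.sum_coe_sort (Finset.Icc 1 m) (fun k => τ k ω),
      Finset.prod_coe_sort (Finset.Icc 1 m) (fun k => w (τ k ω))]
  · rfl

theorem prod_eq_zero_or_sum_nonneg {ι : Type*} {w : ℝ → ℝ≥0∞} (hw0 : ∀ t ≤ 0, w t = 0)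
    (s : Finset ι) (r : ι → ℝ) : ∏ k ∈ s, w (r k) = 0 ∨ 0 ≤ ∑ k ∈ s, r k := by
  refine or_iff_not_imp_left.2 fun h => Finset.sum_nonneg fun k hk => ?_
  by_contra! hrk
  exact h (Finset.prod_eq_zero hk (hw0 _ hrk.le))

theorem lintegral_prod_mul_powKernel_sum_le {Ω : Type*} [MeasurableSpace Ω] {P : Measure Ω}
    [IsProbabilityMeasure P] {τ : ℕ → Ω → ℝ} (hτ : ∀ k, Measurable (τ k))
    (hindep : iIndepFun τ P) {ρ w : ℝ → ℝ≥0∞} (hρ : Measurable ρ)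
    (hlaw : ∀ k, P.map (τ k) = volume.withDensity ρ) (hw : Measurable w)
    (hw0 : ∀ t ≤ 0, w t = 0) {a c x : ℝ} (ha : 0 < a) (hc : 0 ≤ c) (hx : 0 < x)
    (hρw : ∀ᵐ t ∂volume.restrict (Set.Ioc 0 x), ρ t * w t ≤ ENNReal.ofReal (c * t ^ (a - 1)))
    (m : ℕ) {b : ℝ} (hb : 0 < b) :
    ∫⁻ ω, (∏ k ∈ Finset.Icc 1 m, w (τ k ω)) * powKernel x b (∑ k ∈ Finset.Icc 1 m, τ k ω) ∂P
      ≤ ENNReal.ofReal (c ^ m * x ^ (b + m * a - 1)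
          * Real.Gamma b * Real.Gamma a ^ m / Real.Gamma (b + m * a)) := by
  induction m generalizing b with
  | zero =>
    simp [powKernel, Set.indicator_of_mem (Set.mem_Ico.2 ⟨le_rfl, hx⟩),
      (Real.Gamma_pos_of_pos hb).ne']
  | succ m ih =>
    set S : Ω → ℝ := fun ω => ∑ k ∈ Finset.Icc 1 m, τ k ω
    set W : Ω → ℝ≥0∞ := fun ω => ∏ k ∈ Finset.Icc 1 m, w (τ k ω)
    have hS : Measurable S := Finset.measurable_sum _ fun k _ => hτ k
    have hW : Measurable W := Finset.measurable_prod _ fun k _ => hw.comp (hτ k)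
    have hF : Measurable (Function.uncurry fun (v : ℝ × ℝ≥0∞) (t : ℝ) =>
        v.2 * (w t * powKernel x b (v.1 + t))) := by
      fun_prop
    have hstep : ∀ ω, W ω * ∫⁻ t, ρ t * w t * powKernel x b (S ω + t)
        ≤ ENNReal.ofReal (c * beta a b) * (W ω * powKernel x (a + b) (S ω)) := by
      intro ω
      rcases prod_eq_zero_or_sum_nonneg hw0 (Finset.Icc 1 m) (fun k => τ k ω) with h0 | hS0
      · simp [W, h0]
      · rw [mul_left_comm]
        exact mul_le_mul_right (lintegral_mul_powKernel_add_le ha hb hc hS0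
          (fun t ht => by simp [hw0 t ht]) hρw) _
    calc ∫⁻ ω, (∏ k ∈ Finset.Icc 1 (m + 1), w (τ k ω))
          * powKernel x b (∑ k ∈ Finset.Icc 1 (m + 1), τ k ω) ∂P
        = ∫⁻ ω, W ω * (w (τ (m + 1) ω) * powKernel x b (S ω + τ (m + 1) ω)) ∂P := by
          simp only [Finset.prod_Icc_succ_top (Nat.le_add_left 1 m),
            Finset.sum_Icc_succ_top (Nat.le_add_left 1 m), mul_assoc, W, S]
      _ = ∫⁻ ω, W ω * (∫⁻ t, ρ t * w t * powKernel x b (S ω + t)) ∂P := by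
          rw [lintegral_comp_eq_lintegral_lintegral_of_indepFun (hS.prodMk hW) (hτ (m + 1))
            (indepFun_sum_prod_Icc hτ hindep hw m) hF]
          refine lintegral_congr fun ω => ?_
          dsimp only
          rw [hlaw, lintegral_const_mul _ (by fun_prop),
            lintegral_withDensity_eq_lintegral_mul _ hρ (by fun_prop)]
          simp only [Pi.mul_apply, mul_assoc]
      _ ≤ ∫⁻ ω, ENNReal.ofReal (c * beta a b) * (W ω * powKernel x (a + b) (S ω)) ∂P :=
          lintegral_mono hstep
      _ = ENNReal.ofReal (c * beta a b) * ∫⁻ ω, W ω * powKernel x (a + b) (S ω) ∂P :=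
          lintegral_const_mul _ (hW.mul ((measurable_powKernel x _).comp hS))
      _ ≤ ENNReal.ofReal (c * beta a b) * ENNReal.ofReal (c ^ m * x ^ (a + b + m * a - 1)
            * Real.Gamma (a + b) * Real.Gamma a ^ m / Real.Gamma (a + b + m * a)) :=
          mul_le_mul_right (ih (by positivity)) _
      _ = _ := by
          rw [← ENNReal.ofReal_mul (mul_nonneg hc (beta_pos ha hb).le)]
          congr 1
          have hΓ := (Real.Gamma_pos_of_pos (add_pos ha hb)).ne'
          rw [beta, show a + b + m * a = b + ((m + 1 : ℕ) : ℝ) * a by push_cast; ring]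
          field_simp
          ring

noncomputable def negPowWeight (C θ : ℝ) : ℝ → ℝ≥0∞ :=
  (Set.Ioi 0).indicator fun t => ENNReal.ofReal (C * t ^ (-θ))

@[fun_prop]
theorem measurable_negPowWeight (C θ : ℝ) : Measurable (negPowWeight C θ) :=
  (Measurable.ennreal_ofReal (by fun_prop)).indicator measurableSet_Ioi

theorem negPowWeight_of_nonpos (C θ : ℝ) {t : ℝ} (ht : t ≤ 0) : negPowWeight C θ t = 0 :=
  Set.indicator_of_notMem (fun h : 0 < t => ht.not_gt h) _

theorem mul_negPowWeight_le {r : ℝ≥0∞} {C Ctilde κ θ t : ℝ} (hCtilde : 0 ≤ Ctilde)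
    (ht : 0 < t) (hr : r ≤ ENNReal.ofReal (Ctilde * t ^ (κ - 1))) :
    r * negPowWeight C θ t ≤ ENNReal.ofReal (C * Ctilde * t ^ (κ - θ - 1)) := by
  rw [negPowWeight, Set.indicator_of_mem (Set.mem_Ioi.2 ht)]
  calc r * ENNReal.ofReal (C * t ^ (-θ))
      ≤ ENNReal.ofReal (Ctilde * t ^ (κ - 1)) * ENNReal.ofReal (C * t ^ (-θ)) :=
        mul_le_mul_left hr _
    _ = ENNReal.ofReal (C * Ctilde * t ^ (κ - θ - 1)) := by
        rw [← ENNReal.ofReal_mul (by positivity), sub_right_comm, sub_eq_add_neg _ θ,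
          Real.rpow_add ht]
        ring_nf

section Grid

variable {Ω : Type*} {T : ℝ} {τ : ℕ → Ω → ℝ} {ω : Ω}

theorem Tgrid_eq_min_sum (hT : 0 ≤ T) (hτ : ∀ k, 0 ≤ τ k ω) (j : ℕ) :
    Tgrid T τ j ω = min (∑ k ∈ Finset.Icc 1 j, τ k ω) T := by
  induction j with
  | zero => simp [Tgrid, hT]
  | succ j ih =>
    simp only [Tgrid]
    rw [ih, Finset.sum_Icc_succ_top (Nat.le_add_left 1 j)]
    rcases le_total (∑ k ∈ Finset.Icc 1 j, τ k ω) T with h | h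
    · rw [min_eq_left h]
    · rw [min_eq_right h, min_eq_right (le_add_of_nonneg_right (hτ _)),
        min_eq_right (h.trans (le_add_of_nonneg_right (hτ _)))]

theorem Tgrid_NT_lt (hT : 0 < T) : Tgrid T τ (NT T τ ω) ω < T := by
  by_cases hbdd : BddAbove {k | Tgrid T τ k ω < T}
  · exact Nat.sSup_mem ⟨0, hT⟩ hbdd
  · rw [NT, Nat.sSup_of_not_bddAbove hbdd]
    exact hT

theorem Tgrid_eq_sum_of_le_NT (hT : 0 < T) (hτ : ∀ k, 0 ≤ τ k ω) {j : ℕ} (hj : j ≤ NT T τ ω) :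
    Tgrid T τ j ω = ∑ k ∈ Finset.Icc 1 j, τ k ω := by
  have hlt := Tgrid_NT_lt (τ := τ) (ω := ω) hT
  rw [Tgrid_eq_min_sum hT.le hτ, min_lt_iff, or_iff_left (lt_irrefl T)] at hlt
  rw [Tgrid_eq_min_sum hT.le hτ, min_eq_left]
  exact (Finset.sum_le_sum_of_subset_of_nonneg (Finset.Icc_subset_Icc_right hj)
    fun k _ _ => hτ k).trans hlt.le

theorem ofReal_rpow_mul_prod_Tgrid_eq (hT : 0 < T) (hτ : ∀ k, 0 < τ k ω) {C : ℝ} (hC : 0 ≤ C)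
    (η θ : ℝ) :
    ENNReal.ofReal ((T - Tgrid T τ (NT T τ ω) ω) ^ (η - 1)
        * ∏ k ∈ Finset.Icc 1 (NT T τ ω), C * (Tgrid T τ k ω - Tgrid T τ (k - 1) ω) ^ (-θ))
      = (∏ k ∈ Finset.Icc 1 (NT T τ ω), negPowWeight C θ (τ k ω))
          * powKernel T η (∑ k ∈ Finset.Icc 1 (NT T τ ω), τ k ω) := by
  have hτ' : ∀ k, 0 ≤ τ k ω := fun k => (hτ k).le
  have hincr : ∀ k ∈ Finset.Icc 1 (NT T τ ω), Tgrid T τ k ω - Tgrid T τ (k - 1) ω = τ k ω := by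
    intro k hk
    obtain ⟨j, rfl⟩ : ∃ j, k = j + 1 := ⟨k - 1, by grind⟩
    have hj := (Finset.mem_Icc.1 hk).2
    rw [Tgrid_eq_sum_of_le_NT hT hτ' hj, Nat.add_sub_cancel,
      Tgrid_eq_sum_of_le_NT hT hτ' (by omega), Finset.sum_Icc_succ_top (by omega),
      add_sub_cancel_left]
  have hlt := Tgrid_NT_lt (τ := τ) (ω := ω) hT
  rw [Tgrid_eq_sum_of_le_NT hT hτ' le_rfl] at hlt
  rw [Finset.prod_congr rfl fun k hk => by rw [hincr k hk], Tgrid_eq_sum_of_le_NT hT hτ' le_rfl,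
    powKernel, Set.indicator_of_mem (Set.mem_Ico.2 ⟨Finset.sum_nonneg fun k _ => hτ' k, hlt⟩),
    ENNReal.ofReal_mul (Real.rpow_nonneg (sub_nonneg.2 hlt.le) _),
    ENNReal.ofReal_prod_of_nonneg fun k _ => mul_nonneg hC (Real.rpow_nonneg (hτ' k) _), mul_comm]
  congr 1
  exact Finset.prod_congr rfl fun k _ => by
    rw [negPowWeight, Set.indicator_of_mem (Set.mem_Ioi.2 (hτ k))]

end Grid

theorem exists_measurable_withDensity_eq_ae_le {α : Type*} [MeasurableSpace α] {μ : Measure α}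
    [SigmaFinite μ] {f g : α → ℝ≥0∞} [SigmaFinite (μ.withDensity f)] {s : Set α}
    (hs : MeasurableSet s) (hg : Measurable g) (hfg : ∀ x ∈ s, f x ≤ g x) :
    ∃ f', Measurable f' ∧ μ.withDensity f' = μ.withDensity f ∧ ∀ᵐ x ∂μ.restrict s, f' x ≤ g x := by
  have hf' := Measure.withDensity_rnDeriv_eq _ μ (withDensity_absolutelyContinuous μ f)
  refine ⟨_, Measure.measurable_rnDeriv _ μ, hf', ?_⟩
  refine ae_le_of_forall_setLIntegral_le_of_sigmaFinite (Measure.measurable_rnDeriv _ μ)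
    fun t ht _ => ?_
  rw [Measure.restrict_restrict ht, ← withDensity_apply _ (ht.inter hs), hf',
    withDensity_apply _ (ht.inter hs)]
  exact setLIntegral_mono hg fun x hx => hfg x hx.2

theorem ae_pos_of_map_eq_withDensity {Ω : Type*} [MeasurableSpace Ω] {P : Measure Ω}
    {X : Ω → ℝ} (hX : Measurable X) {ρ : ℝ → ℝ≥0∞} (hlaw : P.map X = volume.withDensity ρ)
    (hρ : ∀ t ≤ 0, ρ t = 0) : ∀ᵐ ω ∂P, 0 < X ω := by
  have h : P (X ⁻¹' Set.Iic 0) = 0 := by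
    rw [← Measure.map_apply hX measurableSet_Iic, hlaw, withDensity_apply _ measurableSet_Iic,
      setLIntegral_eq_zero measurableSet_Iic hρ]
  filter_upwards [measure_eq_zero_iff_ae_notMem.1 h] with ω hω
  simpa using hω

theorem stmt6_general {Ω : Type*} [MeasurableSpace Ω] (P : Measure Ω) [IsProbabilityMeasure P]
    (T : ℝ) (hT : 0 < T) (τ : ℕ → Ω → ℝ) (hmeas : ∀ k, Measurable (τ k))
    (hindep : iIndepFun τ P)
    (ρ : ℝ → ℝ) (hρ_supp : ∀ s ≤ (0 : ℝ), ρ s = 0)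
    (hlaw : ∀ k, Measure.map (τ k) P
      = MeasureTheory.volume.withDensity (fun s => ENNReal.ofReal (ρ s)))
    (Ctilde κ : ℝ) (hCtilde : 0 < Ctilde)
    (hρ_bound : ∀ s ∈ Set.Icc (0 : ℝ) T, ρ s ≤ Ctilde * s ^ (κ - 1))
    (C η θ : ℝ) (hC : 0 < C) (hη : 0 < η) (hθ : θ < κ) (n : ℕ) :
    ∫⁻ ω in {ω | NT T τ ω = n}, ENNReal.ofReal
        ((T - Tgrid T τ (NT T τ ω) ω) ^ (η - 1)
          * ∏ k ∈ Finset.Icc 1 (NT T τ ω),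
              C * (Tgrid T τ k ω - Tgrid T τ (k - 1) ω) ^ (-θ)) ∂P
      ≤ ENNReal.ofReal
          ((C * Ctilde) ^ n * T ^ (η + n * (κ - θ) - 1)
            * Real.Gamma η * Real.Gamma (κ - θ) ^ n / Real.Gamma (η + n * (κ - θ))) := by
  have hpos : ∀ᵐ ω ∂P, ∀ k, 0 < τ k ω := ae_all_iff.2 fun k =>
    ae_pos_of_map_eq_withDensity (hmeas k) (hlaw k) fun t ht => by simp [hρ_supp t ht]
  have : IsProbabilityMeasure (volume.withDensity fun s => ENNReal.ofReal (ρ s)) :=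
    hlaw 0 ▸ Measure.isProbabilityMeasure_map (hmeas 0).aemeasurable
  -- `ρ` itself need not be measurable; work with a measurable density `ρ'` of the same law.
  obtain ⟨ρ', hρ', hρ'_eq, hρ'_le⟩ := exists_measurable_withDensity_eq_ae_le (μ := volume)
    measurableSet_Ioc (g := fun t => ENNReal.ofReal (Ctilde * t ^ (κ - 1))) (by fun_prop)
    fun t ht => ENNReal.ofReal_le_ofReal (hρ_bound t (Set.Ioc_subset_Icc_self ht))
  have hbound : ∀ᵐ t ∂volume.restrict (Set.Ioc 0 T),
      ρ' t * negPowWeight C θ t ≤ ENNReal.ofReal (C * Ctilde * t ^ (κ - θ - 1)) := by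
    filter_upwards [hρ'_le, ae_restrict_mem measurableSet_Ioc] with t ht htT
    exact mul_negPowWeight_le hCtilde.le htT.1 ht
  calc _ ≤ ∫⁻ ω in {ω | NT T τ ω = n}, (∏ k ∈ Finset.Icc 1 n, negPowWeight C θ (τ k ω))
          * powKernel T η (∑ k ∈ Finset.Icc 1 n, τ k ω) ∂P := by
        refine setLIntegral_mono_ae (by fun_prop) ?_
        filter_upwards [hpos] with ω hω (hn : NT T τ ω = n)
        rw [ofReal_rpow_mul_prod_Tgrid_eq hT hω hC.le, hn]
    _ ≤ ∫⁻ ω, (∏ k ∈ Finset.Icc 1 n, negPowWeight C θ (τ k ω))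
          * powKernel T η (∑ k ∈ Finset.Icc 1 n, τ k ω) ∂P := setLIntegral_le_lintegral _ _
    _ ≤ _ := lintegral_prod_mul_powKernel_sum_le hmeas hindep hρ'
        (fun k => (hlaw k).trans hρ'_eq.symm) (measurable_negPowWeight C θ)
        (fun t => negPowWeight_of_nonpos C θ) (sub_pos.2 hθ) (by positivity) hT hbound n hη

/-- For i.i.d. positive random variables `(τ_k)` with density `ρ` satisfying
`ρ(s) ≤ C̃ s^{κ−1}` on `[0,T]`, and for every `n ≥ 0`,
`E[(T − T_{N_T})^{η−1} ∏_{k=1}^{N_T} (C ΔT_k^{−θ}) 1_{{N_T = n}}]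
  ≤ (C C̃)ⁿ T^{η + n(κ−θ) − 1} Γ(η) Γ(κ−θ)ⁿ / Γ(η + n(κ−θ))`,
for any `η > 0` and `θ < κ`. -/
theorem stmt6 {Ω : Type*} [MeasurableSpace Ω] (P : Measure Ω) [IsProbabilityMeasure P]
    (T : ℝ) (hT : 0 < T) (τ : ℕ → Ω → ℝ) (hmeas : ∀ k, Measurable (τ k))
    (hindep : iIndepFun τ P)
    (ρ : ℝ → ℝ) (hρ_nonneg : ∀ s, 0 ≤ ρ s) (hρ_supp : ∀ s ≤ (0 : ℝ), ρ s = 0)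
    (hlaw : ∀ k, Measure.map (τ k) P
      = MeasureTheory.volume.withDensity (fun s => ENNReal.ofReal (ρ s)))
    (Ctilde κ : ℝ) (hCtilde : 0 < Ctilde) (hκ : 0 < κ)
    (hρ_bound : ∀ s ∈ Set.Icc (0 : ℝ) T, ρ s ≤ Ctilde * s ^ (κ - 1))
    (C η θ : ℝ) (hC : 0 < C) (hη : 0 < η) (hθ : θ < κ) (n : ℕ) :
    ∫⁻ ω in {ω | NT T τ ω = n}, ENNReal.ofReal
        ((T - Tgrid T τ (NT T τ ω) ω) ^ (η - 1)
          * ∏ k ∈ Finset.Icc 1 (NT T τ ω),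
              C * (Tgrid T τ k ω - Tgrid T τ (k - 1) ω) ^ (-θ)) ∂P
      ≤ ENNReal.ofReal
          ((C * Ctilde) ^ n * T ^ (η + n * (κ - θ) - 1)
            * Real.Gamma η * Real.Gamma (κ - θ) ^ n / Real.Gamma (η + n * (κ - θ))) :=
  stmt6_general P T hT τ hmeas hindep ρ hρ_supp hlaw Ctilde κ hCtilde hρ_bound C η θ hC hη hθ n
end

section
/- For a Gaussian random variable G with mean μ and standard deviation Σ > 0, E[(G − K)₊] = Σ(φ(d) − d Φ(−d)) where d := (K − μ)/Σ, φ is the standard normal density and Φ the standard normal c.d.f. -/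
/-!
Write `G = S Z + μ` with `Z` standard normal. Then `(G − K)₊ = S (Z − d)₊`, and
`E[(Z − d)₊] = ∫_d^∞ z φ(z) dz − d ∫_d^∞ φ(z) dz`. Since `φ' = −z φ`, the first integral is `φ(d)`;
by symmetry of `φ` the second is `Φ(−d)`.
-/

open MeasureTheory ProbabilityTheory Filter Topology Set Real
open scoped NNReal

namespace ProbabilityTheory

lemma gaussianReal_map_affine (μ S : ℝ) :
    (gaussianReal 0 1).map (fun z ↦ S * z + μ) = gaussianReal μ (S ^ 2).toNNReal := by
  have hmul : Measurable (fun z : ℝ ↦ S * z) := measurable_const_mul S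
  rw [show (fun z : ℝ ↦ S * z + μ) = (· + μ) ∘ (S * ·) from rfl,
    ← Measure.map_map (measurable_add_const μ) hmul, gaussianReal_map_const_mul,
    gaussianReal_map_add_const]
  congr 1
  · ring
  · ext; simp [sq_nonneg]

lemma integral_gaussianReal_eq_integral_comp_affine {E : Type*} [NormedAddCommGroup E]
    [NormedSpace ℝ E] {μ S : ℝ} (hS : S ≠ 0) (f : ℝ → E) :
    ∫ x, f x ∂gaussianReal μ (S ^ 2).toNNReal = ∫ z, f (S * z + μ) ∂gaussianReal 0 1 := by
  have he : MeasurableEmbedding (fun z : ℝ ↦ S * z + μ) :=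
    (Homeomorph.mulLeft₀ S hS |>.trans (Homeomorph.addRight μ)).measurableEmbedding
  rw [← gaussianReal_map_affine, he.integral_map]

lemma gaussianPDFReal_zero_one :
    gaussianPDFReal 0 1 = fun x ↦ exp (-x ^ 2 / 2) / √(2 * π) := by
  ext x
  simp [gaussianPDFReal, div_eq_inv_mul]

lemma gaussianPDFReal_zero_neg (v : ℝ≥0) (x : ℝ) :
    gaussianPDFReal 0 v (-x) = gaussianPDFReal 0 v x := by
  simp [gaussianPDFReal]

lemma hasDerivAt_gaussianPDFReal_zero_one (x : ℝ) :
    HasDerivAt (gaussianPDFReal 0 1) (-x * gaussianPDFReal 0 1 x) x := by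
  have hexponent : HasDerivAt (fun y : ℝ ↦ -y ^ 2 / 2) (-x) x :=
    ((hasDerivAt_pow 2 x).neg.div_const 2).congr_deriv (by ring)
  rw [gaussianPDFReal_zero_one]
  exact (hexponent.exp.div_const √(2 * π)).congr_deriv (by ring)

lemma tendsto_gaussianPDFReal_zero_one_atTop :
    Tendsto (gaussianPDFReal 0 1) atTop (𝓝 0) := by
  have hexponent : Tendsto (fun x : ℝ ↦ -x ^ 2 / 2) atTop atBot :=
    (tendsto_neg_atTop_atBot.comp (tendsto_pow_atTop two_ne_zero)).atBot_div_const two_pos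
  have h := (tendsto_exp_atBot.comp hexponent).div_const √(2 * π)
  rw [zero_div] at h
  rwa [gaussianPDFReal_zero_one]

lemma integrable_mul_gaussianPDFReal_zero_one :
    Integrable (fun x ↦ x * gaussianPDFReal 0 1 x) := by
  convert (integrable_mul_exp_neg_mul_sq (one_half_pos (α := ℝ))).div_const √(2 * π) using 2
  rw [gaussianPDFReal_zero_one]
  ring_nf

lemma integral_Ioi_mul_gaussianPDFReal_zero_one (d : ℝ) :
    ∫ x in Ioi d, x * gaussianPDFReal 0 1 x = gaussianPDFReal 0 1 d := by
  have hderiv (x : ℝ) :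
      HasDerivAt (fun y ↦ -gaussianPDFReal 0 1 y) (x * gaussianPDFReal 0 1 x) x :=
    (hasDerivAt_gaussianPDFReal_zero_one x).neg.congr_deriv (by ring)
  rw [integral_Ioi_of_hasDerivAt_of_tendsto (hderiv d).continuousAt.continuousWithinAt
    (fun x _ ↦ hderiv x) integrable_mul_gaussianPDFReal_zero_one.integrableOn
    (by simpa using tendsto_gaussianPDFReal_zero_one_atTop.neg)]
  simp

lemma integral_Ioi_gaussianPDFReal_zero (v : ℝ≥0) (d : ℝ) :
    ∫ x in Ioi d, gaussianPDFReal 0 v x = ∫ x in Iic (-d), gaussianPDFReal 0 v x := by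
  rw [← integral_comp_neg_Ioi]
  simp only [gaussianPDFReal_zero_neg]

lemma integral_max_sub_gaussianReal_zero_one (d : ℝ) :
    ∫ x, max (x - d) 0 ∂gaussianReal 0 1
      = gaussianPDFReal 0 1 d - d * ∫ x in Iic (-d), gaussianPDFReal 0 1 x := by
  have hrestrict : ∫ x, gaussianPDFReal 0 1 x * max (x - d) 0
      = ∫ x in Ioi d, (x * gaussianPDFReal 0 1 x - d * gaussianPDFReal 0 1 x) := by
    rw [← setIntegral_eq_integral_of_forall_compl_eq_zero (s := Ioi d) fun x hx ↦ by
      rw [max_eq_right (sub_nonpos.2 (not_lt.1 hx)), mul_zero]]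
    refine setIntegral_congr_fun measurableSet_Ioi fun x hx ↦ ?_
    rw [max_eq_left (sub_nonneg.2 (le_of_lt (mem_Ioi.1 hx)))]
    ring
  rw [integral_gaussianReal_eq_integral_smul one_ne_zero]
  simp only [smul_eq_mul]
  rw [hrestrict, integral_sub integrable_mul_gaussianPDFReal_zero_one.integrableOn
    ((integrable_gaussianPDFReal 0 1).const_mul d).integrableOn, integral_const_mul,
    integral_Ioi_mul_gaussianPDFReal_zero_one, integral_Ioi_gaussianPDFReal_zero]

end ProbabilityTheory

/-- For a Gaussian random variable `G` with mean `μ` and standard deviation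
`Σ > 0`, `E[(G − K)₊] = Σ(φ(d) − d Φ(−d))` where `d := (K − μ)/Σ`, `φ` is the
standard normal density and `Φ` the standard normal c.d.f. -/
theorem stmt11 (μ S K : ℝ) (hS : 0 < S)
    (φ : ℝ → ℝ) (hφ : ∀ x, φ x = Real.exp (-x ^ 2 / 2) / Real.sqrt (2 * Real.pi))
    (Φ : ℝ → ℝ) (hΦ : ∀ x, Φ x = ∫ u in Set.Iic x, φ u)
    (d : ℝ) (hd : d = (K - μ) / S) :
    (∫ x, max (x - K) 0 ∂(gaussianReal μ (Real.toNNReal (S ^ 2))))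
      = S * (φ d - d * Φ (-d)) := by
  obtain rfl : φ = gaussianPDFReal 0 1 := by rw [gaussianPDFReal_zero_one]; exact funext hφ
  have hpayoff (z : ℝ) : max (S * z + μ - K) 0 = S * max (z - d) 0 := by
    rw [mul_max_of_nonneg _ _ hS.le, mul_zero, hd, mul_sub, mul_div_cancel₀ _ hS.ne']
    ring_nf
  rw [integral_gaussianReal_eq_integral_comp_affine hS.ne', hΦ]
  simp only [hpayoff]
  rw [integral_const_mul, integral_max_sub_gaussianReal_zero_one]
end

section
/- Let Z be a d-dimensional centered Gaussian vector with invertible covariance matrix V, g : ℝᵈ → ℝ of polynomial growth. Then the Hessian in x of E[g(x + Z)] equals E[g(x + Z)(V⁻¹Z (V⁻¹Z)ᵀ − V⁻¹)]. -/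
open MeasureTheory Matrix Real Module

/-!
Writing `F x = ∫ g y * φ (y - x)` moves the variable onto the Gaussian, so `F` can be
differentiated twice under the integral sign. Every derivative of `φ` is `φ` times a polynomial,
hence decays faster than any power of `1 + ‖u‖`; by Peetre's inequality this decay dominates the
polynomial growth of `g` uniformly for `x` in a unit ball. The Hessian is then `∫ g y * D²φ (y - x)`
with `D²φ z (v, w) = φ z * ((V⁻¹z ⬝ v) (V⁻¹z ⬝ w) - v ⬝ V⁻¹w)`.
-/

section RapidDecay

variable {E W W' : Type*} [NormedAddCommGroup E] [NormedAddCommGroup W] [NormedAddCommGroup W']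

def RapidDecay (h : E → W) : Prop :=
  ∀ s : ℝ, ∃ K, ∀ u, ‖h u‖ ≤ K * (1 + ‖u‖) ^ (-s)

theorem one_add_norm_add_rpow_le {s : ℝ} (hs : 0 ≤ s) (a b : E) :
    (1 + ‖a + b‖) ^ s ≤ (1 + ‖a‖) ^ s * (1 + ‖b‖) ^ s := by
  rw [← mul_rpow (by positivity) (by positivity)]
  gcongr
  nlinarith [norm_add_le a b, norm_nonneg a, norm_nonneg b]

theorem one_add_norm_rpow_neg_le {s : ℝ} (hs : 0 ≤ s) (a b : E) :
    (1 + ‖a‖) ^ (-s) ≤ (1 + ‖b‖) ^ s * (1 + ‖a + b‖) ^ (-s) := by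
  rw [rpow_neg (by positivity), rpow_neg (by positivity), ← div_eq_mul_inv,
    le_div_iff₀ (by positivity), ← div_eq_inv_mul, div_le_iff₀ (by positivity), mul_comm]
  exact one_add_norm_add_rpow_le hs a b

theorem RapidDecay.of_norm_le {h : E → W} (hh : RapidDecay h) {f : E → W'} (L : ℝ) (n : ℕ)
    (hf : ∀ u, ‖f u‖ ≤ L * (1 + ‖u‖) ^ n * ‖h u‖) : RapidDecay f := by
  intro s
  obtain ⟨K, hK⟩ := hh (s + n)
  refine ⟨|L| * K, fun u => ?_⟩
  have hpos : 0 < 1 + ‖u‖ := by positivity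
  calc ‖f u‖ ≤ |L| * (1 + ‖u‖) ^ n * ‖h u‖ := by
        refine (hf u).trans (mul_le_mul_of_nonneg_right ?_ (norm_nonneg _))
        gcongr
        exact le_abs_self L
    _ ≤ |L| * (1 + ‖u‖) ^ n * (K * (1 + ‖u‖) ^ (-(s + n))) := by gcongr; exact hK u
    _ = |L| * K * (1 + ‖u‖) ^ (-s) := by
        rw [← rpow_natCast, neg_add, rpow_add hpos, rpow_neg hpos.le (n : ℝ)]
        field_simp

theorem RapidDecay.neg {h : E → W} (hh : RapidDecay h) : RapidDecay (fun u => -h u) :=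
  hh.of_norm_le 1 0 fun u => by simp

theorem RapidDecay.sub {h k : E → W} (hh : RapidDecay h) (hk : RapidDecay k) :
    RapidDecay (fun u => h u - k u) := by
  intro s
  obtain ⟨K, hK⟩ := hh s
  obtain ⟨L, hL⟩ := hk s
  exact ⟨K + L, fun u => (norm_sub_le _ _).trans (by rw [add_mul]; exact add_le_add (hK u) (hL u))⟩

theorem rapidDecay_exp_neg_mul_sq {c : ℝ} (hc : 0 < c) :
    RapidDecay (fun u : E => exp (-c * ‖u‖ ^ 2)) := by
  intro s
  set s' := max s 0
  refine ⟨exp (s' ^ 2 / (4 * c)), fun u => ?_⟩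
  set t := ‖u‖
  have ht : 0 ≤ t := norm_nonneg u
  have hpos : 0 < 1 + t := by positivity
  have hgrowth : (1 + t) ^ s' ≤ exp (c * t ^ 2 + s' ^ 2 / (4 * c)) := by
    calc (1 + t) ^ s' ≤ exp t ^ s' := by
          gcongr
          linarith [add_one_le_exp t]
      _ = exp (t * s') := (exp_mul t s').symm
      _ ≤ exp (c * t ^ 2 + s' ^ 2 / (4 * c)) := by
          gcongr
          rw [← sub_nonneg]
          have : c * t ^ 2 + s' ^ 2 / (4 * c) - t * s' = (2 * c * t - s') ^ 2 / (4 * c) := by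
            field_simp; ring
          rw [this]; positivity
  rw [Real.norm_eq_abs, abs_of_pos (exp_pos _)]
  calc exp (-c * t ^ 2) ≤ exp (s' ^ 2 / (4 * c)) * (1 + t) ^ (-s') := by
        rw [rpow_neg hpos.le, ← div_eq_mul_inv, le_div_iff₀ (by positivity)]
        calc exp (-c * t ^ 2) * (1 + t) ^ s'
            ≤ exp (-c * t ^ 2) * exp (c * t ^ 2 + s' ^ 2 / (4 * c)) := by gcongr
          _ = exp (s' ^ 2 / (4 * c)) := by rw [← exp_add]; ring_nf
    _ ≤ exp (s' ^ 2 / (4 * c)) * (1 + t) ^ (-s) := by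
        gcongr
        · linarith
        · exact le_max_left s 0

end RapidDecay

section Convolution

variable {E W : Type*} [NormedAddCommGroup E] [NormedAddCommGroup W] [NormedSpace ℝ E]
  [FiniteDimensional ℝ E] [MeasurableSpace E] [BorelSpace E] {μ : Measure E}

theorem aestronglyMeasurable_of_hasFDerivAt {ψ : E → ℝ} {ψ' : E → E →L[ℝ] ℝ}
    (hψ : ∀ u, HasFDerivAt ψ (ψ' u) u) : AEStronglyMeasurable ψ' μ := by
  rw [show ψ' = fderiv ℝ ψ from funext fun u => (hψ u).fderiv.symm]
  exact (measurable_fderiv ℝ ψ).aestronglyMeasurable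

variable [μ.IsAddHaarMeasure]

theorem integrable_one_add_norm_rpow_mul_sub_rpow_neg {p s : ℝ}
    (hs : (finrank ℝ E : ℝ) + |p| < s) (x : E) :
    Integrable (fun y => (1 + ‖y‖) ^ p * (1 + ‖y - x‖) ^ (-s)) μ := by
  have hr : (finrank ℝ E : ℝ) < s - |p| := by linarith
  have hint := ((integrable_one_add_norm (μ := μ) hr).comp_sub_right x).const_mul
    ((1 + ‖x‖) ^ |p|)
  refine hint.mono' (by fun_prop) (Filter.Eventually.of_forall fun y => ?_)
  have hpos : 0 < 1 + ‖y - x‖ := by positivity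
  rw [Real.norm_eq_abs, abs_of_nonneg (by positivity)]
  calc (1 + ‖y‖) ^ p * (1 + ‖y - x‖) ^ (-s)
      ≤ ((1 + ‖y - x‖) ^ |p| * (1 + ‖x‖) ^ |p|) * (1 + ‖y - x‖) ^ (-s) := by
        gcongr
        calc (1 + ‖y‖) ^ p ≤ (1 + ‖y‖) ^ |p| :=
              rpow_le_rpow_of_exponent_le (by linarith [norm_nonneg y]) (le_abs_self p)
          _ ≤ _ := by simpa using one_add_norm_add_rpow_le (abs_nonneg p) (y - x) x
    _ = (1 + ‖x‖) ^ |p| * (1 + ‖y - x‖) ^ (-(s - |p|)) := by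
        rw [neg_sub, rpow_sub hpos, rpow_neg hpos.le]
        ring

variable {g : E → ℝ} {C p : ℝ}

theorem RapidDecay.integrable_smul_comp_sub [NormedSpace ℝ W] (hg : AEStronglyMeasurable g μ)
    (hgrowth : ∀ y, |g y| ≤ C * (1 + ‖y‖) ^ p) {h : E → W} (hh : RapidDecay h)
    (hh_meas : AEStronglyMeasurable h μ) (x : E) :
    Integrable (fun y => g y • h (y - x)) μ := by
  obtain ⟨K, hK⟩ := hh (finrank ℝ E + |p| + 1)
  refine ((integrable_one_add_norm_rpow_mul_sub_rpow_neg (μ := μ) (p := p)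
    (lt_add_one _) x).const_mul (C * K)).mono' ?_ (Filter.Eventually.of_forall fun y => ?_)
  · exact hg.smul (hh_meas.comp_quasiMeasurePreserving
      (measurePreserving_sub_right μ x).quasiMeasurePreserving)
  · rw [norm_smul, Real.norm_eq_abs]
    calc |g y| * ‖h (y - x)‖
        ≤ (C * (1 + ‖y‖) ^ p) * (K * (1 + ‖y - x‖) ^ (-(finrank ℝ E + |p| + 1 : ℝ))) :=
          mul_le_mul (hgrowth y) (hK _) (norm_nonneg _) ((abs_nonneg _).trans (hgrowth y))
      _ = _ := by ring

theorem hasFDerivAt_integral_mul_comp_sub (hg : AEStronglyMeasurable g μ)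
    (hgrowth : ∀ y, |g y| ≤ C * (1 + ‖y‖) ^ p) {ψ : E → ℝ} {ψ' : E → E →L[ℝ] ℝ}
    (hψ : ∀ u, HasFDerivAt ψ (ψ' u) u) (hψ_decay : RapidDecay ψ) (hψ'_decay : RapidDecay ψ')
    (x₀ : E) :
    HasFDerivAt (fun x => ∫ y, g y * ψ (y - x) ∂μ) (-∫ y, g y • ψ' (y - x₀) ∂μ) x₀ := by
  have hψ_meas : AEStronglyMeasurable ψ μ :=
    (continuous_iff_continuousAt.2 fun u => (hψ u).continuousAt).aestronglyMeasurable
  have hψ'_meas : AEStronglyMeasurable ψ' μ := aestronglyMeasurable_of_hasFDerivAt hψ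
  set s : ℝ := finrank ℝ E + |p| + 1
  have hs : 0 ≤ s := by positivity
  obtain ⟨K, hK⟩ := hψ'_decay s
  have hK0 : 0 ≤ K := by simpa using (norm_nonneg _).trans (hK 0)
  rw [← integral_neg]
  refine hasFDerivAt_integral_of_dominated_of_fderiv_le (F' := fun x y => -(g y • ψ' (y - x)))
    (bound := fun y => C * (K * 2 ^ s) * ((1 + ‖y‖) ^ p * (1 + ‖y - x₀‖) ^ (-s)))
    (Metric.ball_mem_nhds x₀ one_pos) (Filter.Eventually.of_forall fun x => ?_) ?_ ?_ ?_ ?_ ?_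
  · exact (hψ_decay.integrable_smul_comp_sub hg hgrowth hψ_meas x).aestronglyMeasurable
  · exact hψ_decay.integrable_smul_comp_sub hg hgrowth hψ_meas x₀
  · exact (hψ'_decay.integrable_smul_comp_sub hg hgrowth hψ'_meas x₀).aestronglyMeasurable.neg
  · refine Filter.Eventually.of_forall fun y x hx => ?_
    have hshift : (1 + ‖y - x‖) ^ (-s) ≤ 2 ^ s * (1 + ‖y - x₀‖) ^ (-s) := by
      calc (1 + ‖y - x‖) ^ (-s) ≤ (1 + ‖x - x₀‖) ^ s * (1 + ‖y - x + (x - x₀)‖) ^ (-s) :=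
            one_add_norm_rpow_neg_le hs _ _
        _ ≤ 2 ^ s * (1 + ‖y - x₀‖) ^ (-s) := by
            rw [sub_add_sub_cancel]
            gcongr
            linarith [mem_ball_iff_norm.1 hx]
    rw [norm_neg, norm_smul, Real.norm_eq_abs]
    calc |g y| * ‖ψ' (y - x)‖ ≤ (C * (1 + ‖y‖) ^ p) * (K * (2 ^ s * (1 + ‖y - x₀‖) ^ (-s))) :=
          mul_le_mul (hgrowth y) ((hK _).trans (by gcongr)) (norm_nonneg _)
            ((abs_nonneg _).trans (hgrowth y))
      _ = _ := by ring
  · exact (integrable_one_add_norm_rpow_mul_sub_rpow_neg (lt_add_one _) x₀).const_mul _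
  · refine Filter.Eventually.of_forall fun y x _ => ?_
    refine (((hψ (y - x)).comp x ((hasFDerivAt_id x).const_sub y)).const_mul (g y)).congr_fderiv ?_
    ext w
    simp

theorem fderiv_integral_mul_comp_sub_apply (hg : AEStronglyMeasurable g μ)
    (hgrowth : ∀ y, |g y| ≤ C * (1 + ‖y‖) ^ p) {ψ : E → ℝ} {ψ' : E → E →L[ℝ] ℝ}
    (hψ : ∀ u, HasFDerivAt ψ (ψ' u) u) (hψ_decay : RapidDecay ψ) (hψ'_decay : RapidDecay ψ')
    (x₀ v : E) :
    fderiv ℝ (fun x => ∫ y, g y * ψ (y - x) ∂μ) x₀ v = -∫ y, g y * ψ' (y - x₀) v ∂μ := by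
  rw [(hasFDerivAt_integral_mul_comp_sub hg hgrowth hψ hψ_decay hψ'_decay x₀).fderiv,
    _root_.neg_apply, ContinuousLinearMap.integral_apply
      (hψ'_decay.integrable_smul_comp_sub hg hgrowth (aestronglyMeasurable_of_hasFDerivAt hψ) x₀)]
  rfl

end Convolution

section Gaussian

variable {E : Type*} [NormedAddCommGroup E] [NormedSpace ℝ E]

theorem isCoercive_of_apply_self_pos [FiniteDimensional ℝ E] {B : E →L[ℝ] E →L[ℝ] ℝ}
    (hB : ∀ u, u ≠ 0 → 0 < B u u) : IsCoercive B := by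
  rcases subsingleton_or_nontrivial E with _ | _
  · exact ⟨1, one_pos, fun u => by simp [Subsingleton.elim u 0]⟩
  have hcont : Continuous fun u => B u u := by fun_prop
  obtain ⟨e₀, he₀_mem, hmin⟩ := (isCompact_sphere (0 : E) 1).exists_isMinOn
    (NormedSpace.sphere_nonempty.2 zero_le_one) hcont.continuousOn
  have he₀ : ‖e₀‖ = 1 := by simpa using he₀_mem
  refine ⟨B e₀ e₀, hB e₀ (norm_ne_zero_iff.1 (by simp [he₀])), fun u => ?_⟩
  rcases eq_or_ne u 0 with rfl | hu
  · simp
  have hnorm : 0 < ‖u‖ := norm_pos_iff.2 hu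
  have hmem : ‖u‖⁻¹ • u ∈ Metric.sphere (0 : E) 1 := by
    simp [norm_smul, hnorm.ne']
  calc B e₀ e₀ * ‖u‖ * ‖u‖ ≤ B (‖u‖⁻¹ • u) (‖u‖⁻¹ • u) * ‖u‖ * ‖u‖ := by
        gcongr; exact hmin hmem
    _ = B u u := by
        simp only [map_smul, FunLike.coe_smul, Pi.smul_apply, smul_eq_mul]
        field_simp

variable {B : E →L[ℝ] E →L[ℝ] ℝ}

noncomputable def gaussian (B : E →L[ℝ] E →L[ℝ] ℝ) (u : E) : ℝ := exp (-B u u / 2)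

theorem hasFDerivAt_gaussian (hB : ∀ u v, B u v = B v u) (u : E) :
    HasFDerivAt (gaussian B) (-(gaussian B u • B u)) u := by
  have hq : HasFDerivAt (fun u => -B u u / 2) (-B u) u := by
    have h := (B.hasFDerivAt_of_bilinear (hasFDerivAt_id u) (hasFDerivAt_id u)).const_mul
      (-1 / 2 : ℝ)
    rw [show (fun y => -1 / 2 * B (id y) (id y)) = fun u => -B u u / 2 by funext; simp; ring] at h
    refine h.congr_fderiv ?_
    ext w; simp [hB w u]; ring
  exact hq.exp.congr_fderiv (by ext w; simp [gaussian])

theorem hasFDerivAt_gaussian_mul_apply (hB : ∀ u v, B u v = B v u) (v u : E) :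
    HasFDerivAt (fun u => gaussian B u * B u v)
      (gaussian B u • B v - (B u v * gaussian B u) • B u) u := by
  refine ((hasFDerivAt_gaussian hB u).mul (B.flip v).hasFDerivAt).congr_fderiv ?_
  ext w
  simp [hB w v]
  ring

theorem IsCoercive.rapidDecay_gaussian (hc : IsCoercive B) : RapidDecay (gaussian B) := by
  obtain ⟨c, hc0, hcB⟩ := hc
  refine (rapidDecay_exp_neg_mul_sq (half_pos hc0)).of_norm_le 1 0 fun u => ?_
  simp only [gaussian, Real.norm_eq_abs, abs_exp, pow_zero, one_mul]
  gcongr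
  nlinarith [hcB u]

theorem IsCoercive.rapidDecay_gaussian_smul (hc : IsCoercive B) :
    RapidDecay (fun u => gaussian B u • B u) :=
  hc.rapidDecay_gaussian.of_norm_le ‖B‖ 1 fun u => by
    rw [norm_smul, pow_one, mul_comm]
    gcongr
    exact (B.le_opNorm u).trans (by gcongr; linarith)

theorem IsCoercive.rapidDecay_gaussian_mul_apply (hc : IsCoercive B) (v : E) :
    RapidDecay (fun u => gaussian B u * B u v) :=
  hc.rapidDecay_gaussian.of_norm_le (‖B‖ * ‖v‖) 1 fun u => by
    rw [norm_mul, pow_one, mul_comm]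
    gcongr
    exact (B.le_opNorm₂ u v).trans (by rw [mul_right_comm]; gcongr; linarith)

theorem IsCoercive.rapidDecay_fderiv_gaussian_mul_apply (hc : IsCoercive B) (v : E) :
    RapidDecay (fun u => gaussian B u • B v - (B u v * gaussian B u) • B u) :=
  (hc.rapidDecay_gaussian.of_norm_le ‖B v‖ 0 fun u => by
      rw [norm_smul, pow_zero, mul_one, mul_comm]).sub
    (hc.rapidDecay_gaussian_smul.of_norm_le (‖B‖ * ‖v‖) 1 fun u => by
      rw [mul_smul, norm_smul, pow_one]
      refine mul_le_mul_of_nonneg_right ((B.le_opNorm₂ u v).trans ?_) (norm_nonneg _)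
      rw [mul_right_comm]
      gcongr
      linarith)

end Gaussian

theorem integral_add_mul_eq_integral_mul_sub {G : Type*} [MeasurableSpace G] [AddCommGroup G]
    [MeasurableAdd G] {μ : Measure G} [μ.IsAddRightInvariant] (f ψ : G → ℝ) (x : G) :
    ∫ z, f (x + z) * ψ z ∂μ = ∫ y, f y * ψ (y - x) ∂μ := by
  rw [← integral_add_right_eq_self (fun y => f y * ψ (y - x)) x]
  simp [add_comm]

section GaussianConvolution

variable {E : Type*} [NormedAddCommGroup E] [NormedSpace ℝ E] [FiniteDimensional ℝ E]
  [MeasurableSpace E] [BorelSpace E] {μ : Measure E} [μ.IsAddHaarMeasure]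
  {B : E →L[ℝ] E →L[ℝ] ℝ} {g : E → ℝ} {C p : ℝ}

theorem fderiv_integral_add_mul_gaussian_apply (hB : ∀ u v, B u v = B v u) (hc : IsCoercive B)
    (hg : AEStronglyMeasurable g μ) (hgrowth : ∀ y, |g y| ≤ C * (1 + ‖y‖) ^ p) (x v : E) :
    fderiv ℝ (fun x => ∫ z, g (x + z) * gaussian B z ∂μ) x v
      = ∫ z, g (x + z) * (gaussian B z * B z v) ∂μ := by
  simp_rw [integral_add_mul_eq_integral_mul_sub]
  rw [fderiv_integral_mul_comp_sub_apply hg hgrowth (hasFDerivAt_gaussian hB)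
    hc.rapidDecay_gaussian hc.rapidDecay_gaussian_smul.neg, ← integral_neg]
  simp

theorem differentiableAt_fderiv_integral_add_mul_gaussian_apply (hB : ∀ u v, B u v = B v u)
    (hc : IsCoercive B) (hg : AEStronglyMeasurable g μ)
    (hgrowth : ∀ y, |g y| ≤ C * (1 + ‖y‖) ^ p) (x v : E) :
    DifferentiableAt ℝ (fun x => fderiv ℝ (fun x => ∫ z, g (x + z) * gaussian B z ∂μ) x v) x := by
  simp_rw [fderiv_integral_add_mul_gaussian_apply hB hc hg hgrowth,
    integral_add_mul_eq_integral_mul_sub]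
  exact (hasFDerivAt_integral_mul_comp_sub hg hgrowth (hasFDerivAt_gaussian_mul_apply hB v)
    (hc.rapidDecay_gaussian_mul_apply v) (hc.rapidDecay_fderiv_gaussian_mul_apply v)
    x).differentiableAt

theorem fderiv_fderiv_integral_add_mul_gaussian_apply (hB : ∀ u v, B u v = B v u)
    (hc : IsCoercive B) (hg : AEStronglyMeasurable g μ)
    (hgrowth : ∀ y, |g y| ≤ C * (1 + ‖y‖) ^ p) (x v w : E) :
    fderiv ℝ (fun x => fderiv ℝ (fun x => ∫ z, g (x + z) * gaussian B z ∂μ) x v) x w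
      = ∫ z, g (x + z) * ((B z v * B z w - B v w) * gaussian B z) ∂μ := by
  simp_rw [fderiv_integral_add_mul_gaussian_apply hB hc hg hgrowth,
    integral_add_mul_eq_integral_mul_sub]
  rw [fderiv_integral_mul_comp_sub_apply hg hgrowth (hasFDerivAt_gaussian_mul_apply hB v)
    (hc.rapidDecay_gaussian_mul_apply v) (hc.rapidDecay_fderiv_gaussian_mul_apply v),
    ← integral_neg]
  congr 1 with y
  simp
  ring

end GaussianConvolution

theorem Matrix.IsSymm.dotProduct_mulVec_comm {n : Type*} [Fintype n] {M : Matrix n n ℝ}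
    (hM : M.IsSymm) (u v : n → ℝ) : u ⬝ᵥ M *ᵥ v = M *ᵥ u ⬝ᵥ v := by
  rw [dotProduct_mulVec, ← mulVec_transpose, hM.eq, dotProduct_comm]

/-- Let `Z` be a `d`-dimensional centered Gaussian vector with invertible
covariance matrix `V` (with density `φ` w.r.t. Lebesgue measure), and
`g : ℝᵈ → ℝ` measurable of polynomial growth. Then the Hessian of
`x ↦ E[g(x + Z)]` at `x` equals `E[g(x + Z)(V⁻¹Z (V⁻¹Z)ᵀ − V⁻¹)]`, i.e. its
bilinear action on directions `(v, w)` is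
`E[g(x + Z)((V⁻¹Z ⬝ v)(V⁻¹Z ⬝ w) − vᵀV⁻¹w)]`. -/
theorem stmt13 {d : ℕ} (V : Matrix (Fin d) (Fin d) ℝ) (hV : V.PosDef)
    (g : (Fin d → ℝ) → ℝ) (hg : Measurable g)
    (C p : ℝ) (hgrowth : ∀ y, |g y| ≤ C * (1 + ‖y‖) ^ p)
    (φ : (Fin d → ℝ) → ℝ)
    (hφ : ∀ z, φ z
      = (Real.sqrt ((2 * Real.pi) ^ d * V.det))⁻¹
          * Real.exp (-(z ⬝ᵥ V⁻¹.mulVec z) / 2))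
    (F : (Fin d → ℝ) → ℝ)
    (hF : ∀ x, F x = ∫ z, g (x + z) * φ z)
    (x : Fin d → ℝ) :
    (∀ v : Fin d → ℝ, DifferentiableAt ℝ (fun y => fderiv ℝ F y v) x)
      ∧ ∀ v w : Fin d → ℝ,
          fderiv ℝ (fun y => fderiv ℝ F y v) x w
            = ∫ z, g (x + z)
                * ((V⁻¹.mulVec z ⬝ᵥ v) * (V⁻¹.mulVec z ⬝ᵥ w) - v ⬝ᵥ V⁻¹.mulVec w)
                * φ z := by
  have hsymm : V⁻¹.IsSymm := by simpa [IsHermitian, IsSymm] using hV.inv.isHermitian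
  set B := (toBilin' V⁻¹).toContinuousBilinearMap
  have hB_apply : ∀ u v, B u v = u ⬝ᵥ V⁻¹ *ᵥ v := toBilin'_apply' V⁻¹
  have hB : ∀ u v, B u v = B v u := (isSymm_toBilin'_iff_isSymm.2 hsymm).eq
  have hc : IsCoercive B := isCoercive_of_apply_self_pos fun u hu => by
    simpa [hB_apply] using hV.inv.dotProduct_mulVec_pos hu
  set K := (Real.sqrt ((2 * Real.pi) ^ d * V.det))⁻¹
  have hKg_meas : AEStronglyMeasurable (fun y => K * g y) volume :=
    (hg.const_mul K).aestronglyMeasurable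
  have hKg_growth : ∀ y, |K * g y| ≤ (|K| * C) * (1 + ‖y‖) ^ p := fun y => by
    rw [abs_mul, mul_assoc]
    exact mul_le_mul_of_nonneg_left (hgrowth y) (abs_nonneg K)
  obtain rfl : F = fun x => ∫ z, K * g (x + z) * gaussian B z := funext fun x => by
    rw [hF]
    congr 1 with z
    rw [hφ, gaussian, hB_apply]
    ring
  refine ⟨differentiableAt_fderiv_integral_add_mul_gaussian_apply hB hc hKg_meas hKg_growth x,
    fun v w => ?_⟩
  rw [fderiv_fderiv_integral_add_mul_gaussian_apply hB hc hKg_meas hKg_growth]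
  congr 1 with z
  simp only [hφ, gaussian, hB_apply, hsymm.dotProduct_mulVec_comm z v,
    hsymm.dotProduct_mulVec_comm z w]
  ring
end
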